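/- With up^[n] defined by up^[1] = ↑ and up^[n] = {up^[n-1] | *}, for every n ≥ 1 the game up^[n] + * equals the game {0, up^[n-1] + * | 0, up^[n+1] + *} (with up^[0] + * interpreted as *). -/

import Mathlib

universe u

namespace SetTheory

/-- Pre-games, as in the older Mathlib (`SetTheory.PGame`, since removed from Mathlib). -/
inductive PGame : Type (u + 1)
  | mk : ∀ α β : Type u, (α → PGame) → (β → PGame) → PGame

namespace PGame

/-- The game `{|}`, as in the older Mathlib. -/
instance : Zero PGame := ⟨⟨PEmpty, PEmpty, PEmpty.elim, PEmpty.elim⟩⟩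

/-- `ofLists L R` is the game `{L | R}`, as in the older Mathlib. -/
def ofLists (L R : List PGame.{u}) : PGame.{u} :=
  mk (ULift (Fin L.length)) (ULift (Fin R.length)) (fun i => L.get i.down) fun j => R.get j.down

/-- Inner recursion for `leLF`. -/
def leLFAux {xl xr : Type u} (IL : xl → PGame.{u} → Prop × Prop)
    (IR : xr → PGame.{u} → Prop × Prop) : PGame.{u} → Prop × Prop
  | mk yl yr yL yR =>
    ((∀ i, (IL i (mk yl yr yL yR)).2) ∧ (∀ j, (leLFAux IL IR (yR j)).2),
     (∃ i, (leLFAux IL IR (yL i)).1) ∨ (∃ j, (IR j (mk yl yr yL yR)).1))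

/-- `leLF x y = (x ≤ y, x ⧏ y)`, as the older Mathlib's `PGame.le_lf`. -/
def leLF : PGame.{u} → PGame.{u} → Prop × Prop
  | mk _ _ xL xR => leLFAux (fun i => leLF (xL i)) (fun j => leLF (xR j))

/-- The order on pre-games, as in the older Mathlib. -/
instance : LE PGame := ⟨fun x y => (leLF x y).1⟩

/-- Equivalence `x ≈ y ↔ x ≤ y ∧ y ≤ x`, as in the older Mathlib. -/
instance : HasEquiv PGame := ⟨fun x y => x ≤ y ∧ y ≤ x⟩

/-- Inner recursion for `add`. -/
def addAux {xl xr : Type u} (IL : xl → PGame.{u} → PGame.{u}) (IR : xr → PGame.{u} → PGame.{u})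
    (x : PGame.{u}) : PGame.{u} → PGame.{u}
  | mk yl yr yL yR =>
    mk (xl ⊕ yl) (xr ⊕ yr) (Sum.elim (fun i => IL i (mk yl yr yL yR)) fun i => addAux IL IR x (yL i))
      (Sum.elim (fun j => IR j (mk yl yr yL yR)) fun j => addAux IL IR x (yR j))

/-- Sum of pre-games, as in the older Mathlib. -/
def add : PGame.{u} → PGame.{u} → PGame.{u}
  | mk xl xr xL xR => addAux (fun i => add (xL i)) (fun j => add (xR j)) (mk xl xr xL xR)

instance : Add PGame.{u} := ⟨add⟩

end PGame

end SetTheory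

open SetTheory PGame

/-- star = {0|0} -/
noncomputable def star' : PGame := PGame.ofLists [0] [0]
/-- up = {0|*} -/
noncomputable def up' : PGame := PGame.ofLists [0] [star']
/-- down = {*|0} -/
noncomputable def down' : PGame := PGame.ofLists [star'] [0]

/-- sum of n copies of up -/
noncomputable def nUp : ℕ → PGame
  | 0 => 0
  | n + 1 => nUp n + up'

/-- sum of n copies of down -/
noncomputable def nDown : ℕ → PGame
  | 0 => 0
  | n + 1 => nDown n + down'

/-- iterated up: up^[1] = ↑, up^[n] = {up^[n-1] | *} -/
noncomputable def upIter : ℕ → PGame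
  | 0 => 0
  | 1 => up'
  | n + 2 => PGame.ofLists [upIter (n + 1)] [star']

/-- iterated down: down_[1] = ↓, down_[n] = {* | down_[n-1]} -/
noncomputable def downIter : ℕ → PGame
  | 0 => 0
  | 1 => down'
  | n + 2 => PGame.ofLists [star'] [downIter (n + 1)]

/-- up^[n] + *, with up^[0] + * interpreted as * -/
noncomputable def upIterStar : ℕ → PGame
  | 0 => star'
  | n + 1 => upIter (n + 1) + star'


/-! Write `x = ↑^[n] + ⋆` and `G` for the right-hand side. Left's options of `x` are
`↑^[n-1] + ⋆` and `↑^[n] + 0`, Right's are `⋆ + ⋆ ≈ 0` and `↑^[n] + 0`, and `x ≈ G` is checked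
option by option from the recursive definition of `≤`. The Right option `↑^[n+1] + ⋆` of `G` is
answered by its Left option `↑^[n] + ⋆ = x`; the options `↑^[n] + 0` come down to `0 ≤ ↑^[n]` and
`⋆ ≤ ↑^[n] + ⋆`. These pre-games come without transitivity, so the summands `+ 0` created by
moving in `⋆` are carried along instead of being cancelled. -/

namespace SetTheory.PGame

def leftOptions : PGame.{u} → Set PGame.{u}
  | mk _ _ xL _ => Set.range xL

def rightOptions : PGame.{u} → Set PGame.{u}
  | mk _ _ _ xR => Set.range xR

def LF (x y : PGame.{u}) : Prop := (leLF x y).2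

infix:50 " ⧏ " => LF

@[simp] theorem leftOptions_mk {xl xr : Type u} (xL : xl → PGame.{u}) (xR : xr → PGame.{u}) :
    (mk xl xr xL xR).leftOptions = Set.range xL := rfl

@[simp] theorem rightOptions_mk {xl xr : Type u} (xL : xl → PGame.{u}) (xR : xr → PGame.{u}) :
    (mk xl xr xL xR).rightOptions = Set.range xR := rfl

theorem le_iff_forall_lf {x y : PGame.{u}} :
    x ≤ y ↔ (∀ a ∈ x.leftOptions, a ⧏ y) ∧ ∀ b ∈ y.rightOptions, x ⧏ b := by
  cases x; cases y
  simp only [leftOptions_mk, rightOptions_mk, Set.forall_mem_range]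
  exact Iff.rfl

theorem lf_iff_exists_le {x y : PGame.{u}} :
    x ⧏ y ↔ (∃ a ∈ y.leftOptions, x ≤ a) ∨ ∃ b ∈ x.rightOptions, b ≤ y := by
  cases x; cases y
  simp only [leftOptions_mk, rightOptions_mk, Set.exists_range_iff]
  exact Iff.rfl

theorem lf_of_le_of_mem_leftOptions {x y a : PGame.{u}} (ha : a ∈ y.leftOptions) (h : x ≤ a) :
    x ⧏ y :=
  lf_iff_exists_le.2 (Or.inl ⟨a, ha, h⟩)

theorem lf_of_le_of_mem_rightOptions {x y b : PGame.{u}} (hb : b ∈ x.rightOptions) (h : b ≤ y) :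
    x ⧏ y :=
  lf_iff_exists_le.2 (Or.inr ⟨b, hb, h⟩)

protected theorem le_refl (x : PGame.{u}) : x ≤ x := by
  induction x with
  | mk xl xr xL xR ihl ihr =>
    rw [le_iff_forall_lf]
    simp only [leftOptions_mk, rightOptions_mk, Set.forall_mem_range]
    exact ⟨fun i => lf_of_le_of_mem_leftOptions ⟨i, rfl⟩ (ihl i),
      fun j => lf_of_le_of_mem_rightOptions ⟨j, rfl⟩ (ihr j)⟩

theorem le_of_leftOptions_eq_empty_of_rightOptions_eq_empty {x y : PGame.{u}}
    (hx : x.leftOptions = ∅) (hy : y.rightOptions = ∅) : x ≤ y := by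
  simp [le_iff_forall_lf, hx, hy]

@[simp] theorem leftOptions_zero : (0 : PGame.{u}).leftOptions = ∅ :=
  Set.range_eq_empty _

@[simp] theorem rightOptions_zero : (0 : PGame.{u}).rightOptions = ∅ :=
  Set.range_eq_empty _

@[simp] theorem leftOptions_ofLists (L R : List PGame.{u}) :
    (ofLists L R).leftOptions = {x | x ∈ L} := by
  ext x; simp [ofLists, List.mem_iff_get]

@[simp] theorem rightOptions_ofLists (L R : List PGame.{u}) :
    (ofLists L R).rightOptions = {x | x ∈ R} := by
  ext x; simp [ofLists, List.mem_iff_get]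

@[simp] theorem leftOptions_add (x y : PGame.{u}) :
    (x + y).leftOptions = (· + y) '' x.leftOptions ∪ (x + ·) '' y.leftOptions := by
  cases x; cases y
  simp only [leftOptions_mk, ← Set.range_comp]
  exact Set.Sum.elim_range _ _

@[simp] theorem rightOptions_add (x y : PGame.{u}) :
    (x + y).rightOptions = (· + y) '' x.rightOptions ∪ (x + ·) '' y.rightOptions := by
  cases x; cases y
  simp only [rightOptions_mk, ← Set.range_comp]
  exact Set.Sum.elim_range _ _

theorem zero_add_equiv (x : PGame.{u}) : 0 + x ≈ x := by
  induction x with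
  | mk xl xr xL xR ihl ihr =>
    constructor <;> rw [le_iff_forall_lf] <;> simp only [leftOptions_add, rightOptions_add,
      leftOptions_mk, rightOptions_mk, leftOptions_zero, rightOptions_zero, Set.image_empty,
      Set.empty_union, ← Set.range_comp, Set.forall_mem_range, Function.comp_def]
    · exact ⟨fun i => lf_of_le_of_mem_leftOptions ⟨i, rfl⟩ (ihl i).1,
        fun j => lf_of_le_of_mem_rightOptions (by simp) (ihr j).1⟩
    · exact ⟨fun i => lf_of_le_of_mem_leftOptions (by simp) (ihl i).2,
        fun j => lf_of_le_of_mem_rightOptions ⟨j, rfl⟩ (ihr j).2⟩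

end SetTheory.PGame

@[simp] lemma leftOptions_star : star'.leftOptions = {0} := by
  simp [star']

@[simp] lemma rightOptions_star : star'.rightOptions = {0} := by
  simp [star']

@[simp] lemma leftOptions_upIter_succ (n : ℕ) : (upIter (n + 1)).leftOptions = {upIter n} := by
  cases n <;> simp [upIter, up']

@[simp] lemma rightOptions_upIter_succ (n : ℕ) : (upIter (n + 1)).rightOptions = {star'} := by
  cases n <;> simp [upIter, up']

@[simp] lemma upIterStar_succ (n : ℕ) : upIterStar (n + 1) = upIter (n + 1) + star' := rfl

lemma upIterStar_equiv (n : ℕ) : upIterStar n ≈ upIter n + star' := by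
  cases n with
  | zero => exact ⟨(zero_add_equiv star').2, (zero_add_equiv star').1⟩
  | succ n => exact ⟨PGame.le_refl _, PGame.le_refl _⟩

lemma star_add_star_equiv_zero : star' + star' ≈ 0 := by
  have h := zero_add_equiv (0 : PGame)
  constructor <;> rw [le_iff_forall_lf] <;>
    simp only [leftOptions_add, rightOptions_add, leftOptions_star, rightOptions_star,
      leftOptions_zero, rightOptions_zero, Set.image_singleton, Set.union_singleton,
      Set.mem_insert_iff, Set.mem_singleton_iff, Set.mem_empty_iff_false, IsEmpty.forall_iff,
      implies_true, forall_eq_or_imp, forall_eq, and_true, true_and]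
  · exact ⟨lf_of_le_of_mem_rightOptions (by simp) h.1, lf_of_le_of_mem_rightOptions (by simp) h.1⟩
  · exact ⟨lf_of_le_of_mem_leftOptions (by simp) h.2, lf_of_le_of_mem_leftOptions (by simp) h.2⟩

lemma le_upIter_succ_add_zero {z : PGame} (hz : z.leftOptions = ∅) (n : ℕ) :
    z ≤ upIter (n + 1) + 0 := by
  rw [le_iff_forall_lf, hz]
  simp only [Set.mem_empty_iff_false, IsEmpty.forall_iff, implies_true, rightOptions_add,
    rightOptions_upIter_succ, Set.image_singleton, rightOptions_zero, Set.image_empty,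
    Set.union_empty, Set.mem_singleton_iff, forall_eq, true_and]
  exact lf_of_le_of_mem_leftOptions (a := 0 + 0) (by simp)
    (le_of_leftOptions_eq_empty_of_rightOptions_eq_empty hz (by simp))

lemma star_add_zero_le_upIter_succ_add_star (n : ℕ) :
    star' + 0 ≤ upIter (n + 1) + star' := by
  have h := le_upIter_succ_add_zero (z := 0 + 0) (by simp) n
  rw [le_iff_forall_lf]
  simp only [leftOptions_add, leftOptions_star, Set.image_singleton, leftOptions_zero,
    Set.image_empty, Set.union_empty, Set.mem_singleton_iff, forall_eq, rightOptions_add,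
    rightOptions_upIter_succ, rightOptions_star, Set.union_singleton, Set.mem_insert_iff,
    forall_eq_or_imp]
  exact ⟨lf_of_le_of_mem_leftOptions (by simp) h,
    lf_of_le_of_mem_rightOptions (by simp) h,
    lf_of_le_of_mem_leftOptions (by simp) (PGame.le_refl _)⟩

lemma star_add_zero_le_ofLists (n : ℕ) :
    star' + 0 ≤ ofLists [0, upIterStar n] [0, upIterStar (n + 2)] := by
  have h := (zero_add_equiv (0 : PGame)).1
  rw [le_iff_forall_lf]
  simp only [leftOptions_add, leftOptions_star, Set.image_singleton, leftOptions_zero,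
    Set.image_empty, Set.union_empty, Set.mem_singleton_iff, upIterStar_succ, forall_eq,
    rightOptions_ofLists, List.mem_cons, List.not_mem_nil, or_false, Set.mem_ofPred_eq,
    forall_eq_or_imp]
  exact ⟨lf_of_le_of_mem_leftOptions (by simp) h, lf_of_le_of_mem_rightOptions (by simp) h,
    lf_of_le_of_mem_leftOptions (by simp) (star_add_zero_le_upIter_succ_add_star n)⟩

lemma upIter_succ_add_star_le_ofLists (n : ℕ) :
    upIter (n + 1) + star' ≤ ofLists [0, upIterStar n] [0, upIterStar (n + 2)] := by
  rw [le_iff_forall_lf]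
  simp only [leftOptions_add, leftOptions_upIter_succ, Set.image_singleton, leftOptions_star,
    Set.union_singleton, Set.mem_insert_iff, Set.mem_singleton_iff, upIterStar_succ,
    forall_eq_or_imp, forall_eq, rightOptions_ofLists, List.mem_cons, List.not_mem_nil, or_false,
    Set.mem_ofPred_eq]
  exact ⟨⟨lf_of_le_of_mem_rightOptions (by simp) (star_add_zero_le_ofLists n),
      lf_of_le_of_mem_leftOptions (by simp) (upIterStar_equiv n).2⟩,
    lf_of_le_of_mem_rightOptions (by simp) star_add_star_equiv_zero.1,
    lf_of_le_of_mem_leftOptions (by simp) (PGame.le_refl _)⟩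

lemma ofLists_le_upIter_succ_add_star (n : ℕ) :
    ofLists [0, upIterStar n] [0, upIterStar (n + 2)] ≤ upIter (n + 1) + star' := by
  have h := le_upIter_succ_add_zero (z := 0) (by simp) n
  rw [le_iff_forall_lf]
  simp only [upIterStar_succ, leftOptions_ofLists, List.mem_cons, List.not_mem_nil, or_false,
    Set.mem_ofPred_eq, forall_eq_or_imp, forall_eq, rightOptions_add, rightOptions_upIter_succ,
    Set.image_singleton, rightOptions_star, Set.union_singleton, Set.mem_insert_iff,
    Set.mem_singleton_iff]
  exact ⟨⟨lf_of_le_of_mem_leftOptions (by simp) h,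
      lf_of_le_of_mem_leftOptions (by simp) (upIterStar_equiv n).1⟩,
    lf_of_le_of_mem_rightOptions (by simp) h,
    lf_of_le_of_mem_rightOptions (by simp) star_add_star_equiv_zero.2⟩

theorem stmt8 (n : ℕ) (hn : 1 ≤ n) :
    upIter n + star' ≈
      PGame.ofLists [0, upIterStar (n - 1)] [0, upIterStar (n + 1)] := by
  obtain ⟨m, rfl⟩ : ∃ m, n = m + 1 := ⟨n - 1, by omega⟩
  rw [Nat.add_sub_cancel]
  exact ⟨upIter_succ_add_star_le_ofLists m, ofLists_le_upIter_succ_add_star m⟩
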